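/- Let μ be a deterministic environment. For each initial state s ∈ S and each deterministic policy π, there is a unique history f_s(π) of length m generated by starting in s and following π; this defines f_s : Π₀ → H_m on the set Π₀ of deterministic policies. Let F(f_s) = {s' ∈ S : f_{s'} = f_s}. If μ* is another deterministic environment that is m-counterfactually equivalent to μ, with analogous sets F*(f) = {s* ∈ S* : f_{s*} = f} for f : Π₀ → H_m, then for every s ∈ S: μ(s₀ ∈ F(f_s)) = μ*(s₀ ∈ F*(f_s)), i.e. ∑_{s'∈F(f_s)} T₀(s') = ∑_{s*∈F*(f_s)} T₀*(s*). -/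

import Mathlib

open scoped Classical
open Finset

/-- A POMDP without reward function ("environment"): finite sets of states, actions,
observations, a transition kernel `T`, an initial distribution `T0` and an
observation kernel `Obs`, all given as (row-)stochastic matrices of reals. -/
structure Env (S A O : Type) [Fintype S] [Fintype A] [Fintype O] where
  T : S → A → S → ℝ
  T0 : S → ℝ
  Obs : S → O → ℝ
  T_nonneg : ∀ s a s', 0 ≤ T s a s'
  T_sum : ∀ s a, ∑ s', T s a s' = 1
  T0_nonneg : ∀ s, 0 ≤ T0 s
  T0_sum : ∑ s, T0 s = 1
  Obs_nonneg : ∀ s o, 0 ≤ Obs s o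
  Obs_sum : ∀ s, ∑ o, Obs s o = 1

/-- A history `o₀a₁o₁…a_t o_t` is an initial observation together with a list of
action–observation pairs, stored in *reverse chronological order* (newest pair first). -/
abbrev Hist (A O : Type) := O × List (A × O)

/-- `HPrefix h h'` : the history `h` is an initial segment of `h'` (or equal to it). -/
def HPrefix {A O : Type} (h h' : Hist A O) : Prop := h.1 = h'.1 ∧ h.2 <:+ h'.2

/-- A policy maps histories to probability distributions over actions. -/
structure Policy (A O : Type) [Fintype A] where
  act : Hist A O → A → ℝ
  nonneg : ∀ h a, 0 ≤ act h a
  sum_one : ∀ h, ∑ a, act h a = 1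

/-- A deterministic policy: each output distribution is a point mass. -/
def Policy.IsDet {A O : Type} [Fintype A] (π : Policy A O) : Prop :=
  ∀ h, ∃ a, ∀ a', π.act h a' = if a' = a then 1 else 0

variable {S S' S'' A O : Type}

/-- Joint probability of a history together with the final state:
`histStateProb μ π o₀ l s` is the probability under `μ` and `π` of seeing the history
`(o₀, l)` and the state after the last observation being `s`. -/
noncomputable def histStateProb [Fintype S] [Fintype A] [Fintype O]
    (μ : Env S A O) (π : Policy A O) (o0 : O) : List (A × O) → S → ℝ
  | [], s => μ.T0 s * μ.Obs s o0
  | (a, o) :: rest, s =>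
      π.act (o0, rest) a * (∑ s', histStateProb μ π o0 rest s' * μ.T s' a s) * μ.Obs s o

/-- `μ(h | π)`: the probability of the history `h` under policy `π`:
`μ(o₀a₁o₁…a_t o_t | π) = ∑_{s₀…s_t} T₀(s₀)Obs(o₀|s₀)∏_k Obs(o_k|s_k)T(s_k|s_{k-1},a_k)π(a_k|…)`. -/
noncomputable def histProb [Fintype S] [Fintype A] [Fintype O]
    (μ : Env S A O) (π : Policy A O) (h : Hist A O) : ℝ :=
  ∑ s, histStateProb μ π h.1 h.2 s

/-- `μ(h' | h, π)`: conditional probability of a history given another, via Bayes' rule;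
set to `0` when `h` is not an initial segment of `h'` or the conditioning event has
probability `0`. -/
noncomputable def condProb [Fintype S] [Fintype A] [Fintype O]
    (μ : Env S A O) (π : Policy A O) (h h' : Hist A O) : ℝ :=
  if HPrefix h h' ∧ histProb μ π h ≠ 0 then histProb μ π h' / histProb μ π h else 0

/-- `m`-equivalence: all conditional probabilities of histories of length `≤ m`
coincide, for all policies. -/
def MEquiv [Fintype S] [Fintype S'] [Fintype A] [Fintype O]
    (μ : Env S A O) (μ' : Env S' A O) (m : ℕ) : Prop :=
  ∀ (π : Policy A O) (h h' : Hist A O), h.2.length ≤ m → h'.2.length ≤ m →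
    condProb μ π h h' = condProb μ' π h h'

/-- A deterministic environment policy of length `m`: a triple `(T̂₀, T̂, Ô)` with
`T̂₀ ∈ S`, `T̂ : S × A × {1,…,m} → S` (here `Fin m` with value `i` standing for turn `i+1`)
and `Ô : S × {0,…,m} → O`. -/
abbrev EnvPol (S A O : Type) (m : ℕ) := S × (S → A → Fin m → S) × (S → Fin (m + 1) → O)

/-- `μ(π_μ) = T₀(T̂₀) ⬝ ∏_{s,a,i} T(T̂(s,a,i)|s,a) ⬝ ∏_{s,i} Obs(Ô(s,i)|s)`. -/
noncomputable def envPolProb [Fintype S] [Fintype A] [Fintype O]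
    (μ : Env S A O) {m : ℕ} (ep : EnvPol S A O m) : ℝ :=
  μ.T0 ep.1 *
    ((∏ s, ∏ a, ∏ i, μ.T s a (ep.2.1 s a i)) * ∏ s, ∏ i, μ.Obs s (ep.2.2 s i))

/-- The state reached by following the environment policy `ep` along the actions of the
(reverse chronological) action–observation list: `s₀ = T̂₀`, `s_k = T̂(s_{k-1}, a_k, k)`. -/
def epState {m : ℕ} (ep : EnvPol S A O m) : List (A × O) → S
  | [] => ep.1
  | (a, _) :: rest =>
      if h : rest.length < m then ep.2.1 (epState ep rest) a ⟨rest.length, h⟩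
      else epState ep rest

/-- `μ(h | π_μ, π)`: the probability of the history `h = (o₀, l)` when the dynamics are
determined by the environment policy `ep` and the actions are drawn from `π`; it is
`∏_k π(a_k | h_{k-1})` if the observations of `h` match those generated by `ep` along the
actions of `h`, and `0` otherwise. -/
noncomputable def epHistProb {m : ℕ} [Fintype A] (ep : EnvPol S A O m) (π : Policy A O)
    (o0 : O) : List (A × O) → ℝ
  | [] => if ep.2.2 ep.1 0 = o0 then 1 else 0
  | (a, o) :: rest =>
      epHistProb ep π o0 rest * π.act (o0, rest) a *
        (if h : rest.length < m then
          (if ep.2.2 (ep.2.1 (epState ep rest) a ⟨rest.length, h⟩)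
              ⟨rest.length + 1, by omega⟩ = o then 1 else 0)
         else 0)

/-- `m`-counterfactual equivalence: for every finite collection `(h_{t_i}, π_i)` of
history–policy pairs with all `t_i ≤ m`,
`∑_{π_μ} μ(π_μ) ∏_i μ(h_{t_i}|π_μ,π_i) = ∑_{π_{μ'}} μ'(π_{μ'}) ∏_i μ'(h_{t_i}|π_{μ'},π_i)`. -/
def MCounterEquiv [Fintype S] [DecidableEq S] [Fintype S'] [DecidableEq S']
    [Fintype A] [DecidableEq A] [Fintype O]
    (μ : Env S A O) (μ' : Env S' A O) (m : ℕ) : Prop :=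
  ∀ (n : ℕ) (hs : Fin n → Hist A O) (πs : Fin n → Policy A O),
    (∀ i, (hs i).2.length ≤ m) →
    (∑ ep : EnvPol S A O m, envPolProb μ ep * ∏ i, epHistProb ep (πs i) (hs i).1 (hs i).2)
      = ∑ ep : EnvPol S' A O m, envPolProb μ' ep * ∏ i, epHistProb ep (πs i) (hs i).1 (hs i).2

/-- A deterministic environment: every transition and observation distribution is a
point mass. -/
def IsDetEnv [Fintype S] [Fintype A] [Fintype O] (μ : Env S A O) : Prop :=
  (∀ s a, ∃ s', ∀ s'', μ.T s a s'' = if s'' = s' then 1 else 0) ∧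
  (∀ s, ∃ o, ∀ o', μ.Obs s o' = if o' = o then 1 else 0)

/-- `μ(h | s₀ = s, π)` (probability of the history conditional on the initial state),
with the final state summed out below. -/
noncomputable def histStateProbFrom [Fintype S] [Fintype A] [Fintype O]
    (μ : Env S A O) (π : Policy A O) (s0 : S) (o0 : O) : List (A × O) → S → ℝ
  | [], s => (if s = s0 then 1 else 0) * μ.Obs s o0
  | (a, o) :: rest, s =>
      π.act (o0, rest) a *
        (∑ s', histStateProbFrom μ π s0 o0 rest s' * μ.T s' a s) * μ.Obs s o

/-- `μ(h | s₀ = s, π)`. -/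
noncomputable def histProbFrom [Fintype S] [Fintype A] [Fintype O]
    (μ : Env S A O) (π : Policy A O) (s0 : S) (h : Hist A O) : ℝ :=
  ∑ s, histStateProbFrom μ π s0 h.1 h.2 s

/-- The posterior `μ(s₀ = s | h)` over the initial state given a history, computed by
Bayes' rule from any policy `π` with `μ(h|π) > 0` (it is independent of the choice of
such a policy), and set to `0` if no such policy exists. -/
noncomputable def posterior [Fintype S] [Fintype A] [Fintype O]
    (μ : Env S A O) (h : Hist A O) (s : S) : ℝ :=
  if hex : ∃ π : Policy A O, 0 < histProb μ π h then
    μ.T0 s * histProbFrom μ hex.choose s h /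
      ∑ s', μ.T0 s' * histProbFrom μ hex.choose s' h
  else 0

/-- Given `m`, a pure learning process on `μ` is a map `P` from histories of length `≤ m`
to `[0,1]` realized, on some deterministic environment `μ'` that is `m`-counterfactually
equivalent to `μ`, as `P(h) = ∑_{s'} p_{s'} μ'(s₀ = s' | h)` for constants `p_{s'} ∈ [0,1]`. -/
def IsPureLearning [Fintype S] [DecidableEq S] [Fintype A] [DecidableEq A] [Fintype O]
    (μ : Env S A O) (m : ℕ) (P : Hist A O → ℝ) : Prop :=
  (∀ h : Hist A O, h.2.length ≤ m → P h ∈ Set.Icc (0 : ℝ) 1) ∧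
  ∃ (S' : Type) (_ : Fintype S') (_ : DecidableEq S') (μ' : Env S' A O) (p : S' → ℝ),
    IsDetEnv μ' ∧ MCounterEquiv μ μ' m ∧ (∀ s', p s' ∈ Set.Icc (0 : ℝ) 1) ∧
    ∀ h : Hist A O, h.2.length ≤ m → P h = ∑ s', p s' * posterior μ' h s'

/-- First components: the history (in reverse chronological order) generated after `t`
turns in a deterministic environment given by functions `(Td, Od)`, starting from state
`s0` and following the deterministic policy `p`; second component: the state reached. -/
def genHistAux (Td : S → A → S) (Od : S → O) (p : Hist A O → A) (s0 : S) :
    ℕ → List (A × O) × S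
  | 0 => ([], s0)
  | t + 1 =>
      let r := genHistAux Td Od p s0 t
      let a := p (Od s0, r.1)
      let s' := Td r.2 a
      ((a, Od s') :: r.1, s')

/-- `f_{s0}(p)` truncated at length `t`: the unique history of length `t` generated from
the initial state `s0` by the deterministic policy `p` in the deterministic environment
given by the functions `(Td, Od)`. -/
def genHist (Td : S → A → S) (Od : S → O) (p : Hist A O → A) (s0 : S) (t : ℕ) :
    Hist A O :=
  (Od s0, (genHistAux Td Od p s0 t).1)

/-- The fiber `F(f_s)` (for `s` a state of the deterministic environment `(Td', Od')`):
all initial states `s0` of the deterministic environment `(Td, Od)` whose generated-history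
map `f_{s0} : Π₀ → H_m` equals `f_s`. -/
noncomputable def fiber [Fintype S] (Td : S → A → S) (Od : S → O)
    (Td' : S' → A → S') (Od' : S' → O) (m : ℕ) (s : S') : Finset S :=
  Finset.univ.filter fun s0 => ∀ p : Hist A O → A, genHist Td Od p s0 m = genHist Td' Od' p s m

/-! In a deterministic environment the only environment policy of positive weight starting in
`s₀` is the one that copies the dynamics, and its weight is `T₀(s₀)`. Hence the left side of
counterfactual equivalence is `∑_{s₀} T₀(s₀) ∏_i μ(h_i | s₀, π_i)`. A deterministic policy matters
only through its values on the finitely many histories of length `< m`, so a finite family `(π_i)`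
can represent all of them; taking `h_i = f_s(π_i)` makes the product the indicator of
`s₀ ∈ F(f_s)`, and the two sides of the equivalence become the two fiber probabilities. -/

lemma Finite.exists_fin_family_forall_exists_eq {α β : Type*} [Finite β] (f : α → β) :
    ∃ (n : ℕ) (g : Fin n → α), ∀ a, ∃ i, f (g i) = f a := by
  obtain ⟨n, ⟨e⟩⟩ := Finite.exists_equiv_fin (Set.range f)
  refine ⟨n, fun i => (e.symm i).2.choose, fun a => ⟨e ⟨f a, a, rfl⟩, ?_⟩⟩
  simpa using (e.symm (e ⟨f a, a, rfl⟩)).2.choose_spec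

def CoversPoliciesUpTo {n : ℕ} (m : ℕ) (ps : Fin n → Hist A O → A) : Prop :=
  ∀ p : Hist A O → A, ∃ i, ∀ h : Hist A O, h.2.length < m → ps i h = p h

lemma exists_coversPoliciesUpTo (A O : Type) [Finite A] [Finite O] (m : ℕ) :
    ∃ (n : ℕ) (ps : Fin n → Hist A O → A), CoversPoliciesUpTo m ps := by
  have : Finite {h : Hist A O // h.2.length < m} := by
    have := Set.finite_univ.prod (List.finite_length_lt (A × O) m) (s := (Set.univ : Set O))
    rw [Set.univ_prod] at this
    exact this.to_subtype
  obtain ⟨n, ps, hps⟩ := Finite.exists_fin_family_forall_exists_eq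
    fun (p : Hist A O → A) (h : {h : Hist A O // h.2.length < m}) => p h
  refine ⟨n, ps, fun p => ?_⟩
  obtain ⟨i, hi⟩ := hps p
  exact ⟨i, fun h hh => congrFun hi ⟨h, hh⟩⟩

section GeneratedHistory

variable (Td : S → A → S) (Od : S → O)

lemma genHistAux_length (p : Hist A O → A) (s0 : S) (t : ℕ) :
    (genHistAux Td Od p s0 t).1.length = t := by
  induction t with
  | zero => rfl
  | succ t ih => simp [genHistAux, ih]

lemma genHistAux_congr {m : ℕ} {p p' : Hist A O → A}
    (hp : ∀ h : Hist A O, h.2.length < m → p h = p' h) (s0 : S) {t : ℕ} (ht : t ≤ m) :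
    genHistAux Td Od p s0 t = genHistAux Td Od p' s0 t := by
  induction t with
  | zero => rfl
  | succ t ih =>
    have hlt : (Od s0, (genHistAux Td Od p' s0 t).1).2.length < m := by
      rw [genHistAux_length]; omega
    simp only [genHistAux, ih (by omega), hp _ hlt]

lemma genHist_succ_eq_iff (p : Hist A O → A) (s0 : S) (t : ℕ) (o0 : O) (a : A) (o : O)
    (l : List (A × O)) :
    genHist Td Od p s0 (t + 1) = (o0, (a, o) :: l) ↔
      genHist Td Od p s0 t = (o0, l) ∧ a = p (o0, l) ∧
        o = Od (Td (genHistAux Td Od p s0 t).2 a) := by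
  simp only [genHist, genHistAux, Prod.mk.injEq, List.cons.injEq]
  grind

end GeneratedHistory

noncomputable def detPolicy [Fintype A] (p : Hist A O → A) : Policy A O where
  act h a := if a = p h then 1 else 0
  nonneg h a := by split <;> norm_num
  sum_one h := by simp

def EnvPol.ofDet (Td : S → A → S) (Od : S → O) (m : ℕ) (s0 : S) : EnvPol S A O m :=
  (s0, fun s a _ => Td s a, fun s _ => Od s)

section DetEnvPol

variable (Td : S → A → S) (Od : S → O) {m : ℕ} (s0 : S)

lemma epState_ofDet_genHistAux (p : Hist A O → A) {t : ℕ} (ht : t ≤ m) :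
    epState (EnvPol.ofDet Td Od m s0) (genHistAux Td Od p s0 t).1
      = (genHistAux Td Od p s0 t).2 := by
  induction t with
  | zero => rfl
  | succ t ih =>
    have hlt : (genHistAux Td Od p s0 t).1.length < m := by
      rw [genHistAux_length]; omega
    simp only [genHistAux, epState, dif_pos hlt, ih (by omega)]
    rfl

lemma epHistProb_ofDet_detPolicy [Fintype A] (p : Hist A O → A) (h : Hist A O)
    (hm : h.2.length ≤ m) :
    epHistProb (EnvPol.ofDet Td Od m s0) (detPolicy p) h.1 h.2
      = if genHist Td Od p s0 h.2.length = h then 1 else 0 := by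
  obtain ⟨o0, l⟩ := h
  induction l with
  | nil =>
    by_cases ho : Od s0 = o0 <;> simp [epHistProb, EnvPol.ofDet, genHist, genHistAux, ho]
  | cons ao rest ih =>
    obtain ⟨a, o⟩ := ao
    have hlt : rest.length < m := by simp only [List.length_cons] at hm; omega
    simp only [epHistProb, dif_pos hlt, ih hlt.le, List.length_cons, genHist_succ_eq_iff]
    by_cases hr : genHist Td Od p s0 rest.length = (o0, rest)
    · have hrest : (genHistAux Td Od p s0 rest.length).1 = rest := congrArg Prod.snd hr
      have hstate := epState_ofDet_genHistAux Td Od s0 p hlt.le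
      rw [hrest] at hstate
      rw [hstate]
      simp only [hr, true_and, if_true, one_mul, detPolicy, EnvPol.ofDet]
      split_ifs <;> grind
    · simp [hr]

end DetEnvPol

section DetEnv

variable [Fintype S] [DecidableEq S] [Fintype A] [Fintype O] (μ : Env S A O)
  {Td : S → A → S} {Od : S → O}
  (hT : ∀ s a s', μ.T s a s' = if s' = Td s a then 1 else 0)
  (hO : ∀ s o, μ.Obs s o = if o = Od s then 1 else 0)
include hT hO

lemma envPolProb_of_det {m : ℕ} (s0 : S) (f : (S → A → Fin m → S) × (S → Fin (m + 1) → O)) :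
    envPolProb μ (s0, f) = if f = (EnvPol.ofDet Td Od m s0).2 then μ.T0 s0 else 0 := by
  obtain ⟨f1, f2⟩ := f
  simp only [envPolProb, EnvPol.ofDet, hT, hO, Finset.prod_boole, Finset.mem_univ, forall_const,
    Prod.mk.injEq, funext_iff]
  split_ifs <;> grind

lemma sum_envPolProb_mul_of_det [DecidableEq A] (m : ℕ) (G : EnvPol S A O m → ℝ) :
    ∑ ep : EnvPol S A O m, envPolProb μ ep * G ep
      = ∑ s0, μ.T0 s0 * G (EnvPol.ofDet Td Od m s0) := by
  rw [Fintype.sum_prod_type]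
  refine Finset.sum_congr rfl fun s0 _ => ?_
  simp only [envPolProb_of_det μ hT hO, ite_mul, zero_mul, Finset.sum_ite_eq', Finset.mem_univ,
    if_true]
  rfl

end DetEnv

section Fiber

variable [Fintype S] (Td : S → A → S) (Od : S → O) (Td' : S' → A → S') (Od' : S' → O)
  {m n : ℕ} {ps : Fin n → Hist A O → A}

lemma mem_fiber_iff_of_cover
    (hps : CoversPoliciesUpTo m ps)
    (s : S') (s0 : S) :
    s0 ∈ fiber Td Od Td' Od' m s ↔
      ∀ i, genHist Td Od (ps i) s0 m = genHist Td' Od' (ps i) s m := by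
  refine ⟨fun hs0 i => (mem_filter.1 hs0).2 (ps i),
    fun hs0 => mem_filter.2 ⟨mem_univ _, fun p => ?_⟩⟩
  obtain ⟨i, hi⟩ := hps p
  simp only [genHist, ← genHistAux_congr Td Od hi s0 le_rfl,
    ← genHistAux_congr Td' Od' hi s le_rfl]
  exact hs0 i

lemma sum_mul_prod_epHistProb_ofDet [Fintype A]
    (hps : CoversPoliciesUpTo m ps)
    (s : S') (T0 : S → ℝ) :
    ∑ s0, T0 s0 * ∏ i, epHistProb (EnvPol.ofDet Td Od m s0) (detPolicy (ps i))
        (genHist Td' Od' (ps i) s m).1 (genHist Td' Od' (ps i) s m).2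
      = ∑ s0 ∈ fiber Td Od Td' Od' m s, T0 s0 := by
  have hlen : ∀ i, (genHist Td' Od' (ps i) s m).2.length = m := fun i => genHistAux_length ..
  simp only [epHistProb_ofDet_detPolicy _ _ _ _ _ (hlen _).le, hlen, Finset.prod_boole,
    Finset.mem_univ, true_implies, ← mem_fiber_iff_of_cover Td Od Td' Od' hps, mul_ite, mul_one,
    mul_zero, Finset.sum_ite_mem, Finset.univ_inter]

end Fiber

/-- Let `μ` and `μ*` be deterministic environments (kernels the point
masses of `(Td, Od)` and `(Tds, Ods)`) that are `m`-counterfactually equivalent. For each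
initial state `s`, let `f_s : Π₀ → H_m` be the map sending a deterministic policy to the
unique history of length `m` it generates from `s`, and `F(f_s)`, `F*(f_s)` the fibers of
states of `μ`, resp. `μ*`, with the same generated-history map. Then for every `s ∈ S`,
`μ(s₀ ∈ F(f_s)) = μ*(s₀ ∈ F*(f_s))`, i.e. `∑_{s'∈F(f_s)} T₀(s') = ∑_{s*∈F*(f_s)} T₀*(s*)`. -/
theorem fiber_prob_eq_of_counterfactual_equiv
    {S Sstar A O : Type} [Fintype S] [DecidableEq S] [Fintype Sstar] [DecidableEq Sstar]
    [Fintype A] [DecidableEq A] [Fintype O]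
    (μ : Env S A O) (μstar : Env Sstar A O) (m : ℕ)
    (Td : S → A → S) (Od : S → O)
    (hT : ∀ s a s', μ.T s a s' = if s' = Td s a then 1 else 0)
    (hO : ∀ s o, μ.Obs s o = if o = Od s then 1 else 0)
    (Tds : Sstar → A → Sstar) (Ods : Sstar → O)
    (hTs : ∀ s a s', μstar.T s a s' = if s' = Tds s a then 1 else 0)
    (hOs : ∀ s o, μstar.Obs s o = if o = Ods s then 1 else 0)
    (hce : MCounterEquiv μ μstar m) :
    ∀ s : S,
      ∑ s' ∈ fiber Td Od Td Od m s, μ.T0 s'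
        = ∑ sstar ∈ fiber Tds Ods Td Od m s, μstar.T0 sstar := by
  intro s
  obtain ⟨n, ps, hps⟩ := exists_coversPoliciesUpTo A O m
  have h := hce n (fun i => genHist Td Od (ps i) s m) (fun i => detPolicy (ps i))
    fun i => (genHistAux_length ..).le
  rwa [sum_envPolProb_mul_of_det μ hT hO, sum_envPolProb_mul_of_det μstar hTs hOs,
    sum_mul_prod_epHistProb_ofDet _ _ _ _ hps, sum_mul_prod_epHistProb_ofDet _ _ _ _ hps] at h
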